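/- Let U ⊆ V ⊆ R^d be ℤ^n-graded submodules, let h_1,…,h_t ∈ V be homogeneous elements whose images generate V/U, let S ⊆ ⊕_{i=1}^t Σ^{deg h_i} R be a homogeneous generating set of the syzygy module Syz(H) := ker(e_i ↦ h_i + U), and let A ∈ R^{t×|S|} be the matrix with the elements of S as columns. Let A_0 be the matrix over k obtained from A by taking the constant term of each entry, let r = rank(A_0), and suppose I × J with |I| = |J| = r indexes an invertible r × r submatrix of A_0. Then {h_i + U : i ∉ I} is a minimal generating set of V/U. -/

import Mathlib

noncomputable section

/-- The free module `R^d` over `R = k[X_1, …, X_n]`. -/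
abbrev FreeMod (k : Type*) [Field k] (n d : ℕ) := Fin d → MvPolynomial (Fin n) k

variable {k : Type*} [Field k] {n d : ℕ}

/-- The map `R^t → R^d`, `v ↦ ∑ i, v i • h i`. -/
def combMap {t : ℕ} (h : Fin t → FreeMod k n d) :
    FreeMod k n t →ₗ[MvPolynomial (Fin n) k] FreeMod k n d where
  toFun v := ∑ i, v i • h i
  map_add' v w := by simp [add_smul, Finset.sum_add_distrib]
  map_smul' c v := by simp [Finset.smul_sum, smul_smul]

end

/-! Restricting the syzygies indexed by `J` to the rows `I` gives a square matrix `B` over `R`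
whose entries are homogeneous (of total degree `|γ_l| - |deg_m|`, possibly negative) and whose
constant terms form the invertible matrix `A₀[I, J]`. So `det B` is homogeneous with nonzero
constant term, hence a nonzero scalar, and `B` is invertible over `R`; combining the syzygies
along the columns of `B⁻¹` expresses each `h_i + U`, `i ∈ I`, through the `h_j + U`, `j ∉ I`.

Conversely, expressing `h_{i₀} + U`, `i₀ ∉ I`, through the other `h_j + U`, `j ∉ I`, gives a
syzygy with coefficient `1` at `i₀` and `0` on `I`. Its vector of constant terms lies in the
column space of `A₀` and vanishes on the rows `I`; since the columns `J` span that space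
(`rank A₀ = r`) and `A₀[I, J]` is invertible, it vanishes, contradicting the `1` at `i₀`. -/

namespace MvPolynomial

variable {R σ M : Type*} [CommRing R] [AddCommGroup M] {w : σ → M}

theorem isWeightedHomogeneous_of_forall_add_eq {φ : MvPolynomial σ R} {a b : σ →₀ ℕ}
    (h : ∀ x ∈ φ.support, x + a = b) :
    IsWeightedHomogeneous w φ (Finsupp.weight w b - Finsupp.weight w a) := by
  intro x hx
  rw [← h x (mem_support_iff.mpr hx), map_add, add_sub_cancel_right]

theorem isWeightedHomogeneous_det {ρ : Type*} [Fintype ρ] [DecidableEq ρ]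
    (B : Matrix ρ ρ (MvPolynomial σ R)) (D G : ρ → M)
    (hB : ∀ m l, IsWeightedHomogeneous w (B m l) (G l - D m)) :
    IsWeightedHomogeneous w B.det (∑ l, G l - ∑ m, D m) := by
  rw [Matrix.det_apply]
  refine IsWeightedHomogeneous.sum _ _ _ fun π _ => ?_
  have hprod := IsWeightedHomogeneous.prod Finset.univ (fun l => B (π l) l) _
    fun l _ => hB (π l) l
  rw [Finset.sum_sub_distrib, Equiv.sum_comp π D] at hprod
  rw [Units.smul_def]
  exact Submodule.smul_of_tower_mem (weightedHomogeneousSubmodule R w _) _ hprod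

theorem isUnit_of_isWeightedHomogeneous_one_of_constantCoeff_ne_zero {K : Type*} [Field K]
    {φ : MvPolynomial σ K} {d : ℤ} (hφ : IsWeightedHomogeneous (fun _ => (1 : ℤ)) φ d)
    (h0 : constantCoeff φ ≠ 0) : IsUnit φ := by
  have hd : d = 0 := by
    rw [← hφ (by rwa [← constantCoeff_eq]), map_zero]
  have hdeg : φ.totalDegree = 0 := by
    rw [totalDegree_eq_zero_iff]
    intro x hx
    have hx0 : Finsupp.weight (fun _ => (1 : ℤ)) x = 0 := hd ▸ hφ (mem_support_iff.mp hx)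
    have hx_deg : x.degree = 0 := by
      have hcast : Finsupp.weight (fun _ => (1 : ℤ)) x = (x.degree : ℤ) := by
        simp [Finsupp.weight_apply, Finsupp.degree_apply, Finsupp.sum]
      omega
    simp [(Finsupp.degree_eq_zero_iff x).mp hx_deg]
  rw [totalDegree_eq_zero_iff_eq_C.mp hdeg, ← constantCoeff_eq]
  exact (isUnit_iff_ne_zero.mpr h0).map C

end MvPolynomial

namespace Matrix

theorem mulVec_eq_zero_of_apply_eq_zero_of_isUnit_submatrix_det {K ι κ : Type*} [Field K]
    [Fintype ι] [Fintype κ] {r : ℕ} (A : Matrix ι κ K) (hA : A.rank = r)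
    (eI : Fin r → ι) (eJ : Fin r → κ)
    (hdet : IsUnit (A.submatrix eI eJ).det) {q : κ → K} (hq : ∀ m, (A *ᵥ q) (eI m) = 0) :
    A *ᵥ q = 0 := by
  classical
  set A' := A.submatrix id eJ
  have hM : Function.Injective (A.submatrix eI eJ).mulVec :=
    mulVec_injective_of_isUnit ((isUnit_iff_isUnit_det _).mpr hdet)
  have hA'_rows : ∀ g, (fun m => (A' *ᵥ g) (eI m)) = A.submatrix eI eJ *ᵥ g := fun _ => rfl
  have hA'_inj : Function.Injective A'.mulVecLin := fun g g' hgg' =>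
    hM (by rw [← hA'_rows, ← hA'_rows]; exact congrArg (fun c m => c (eI m)) hgg')
  have hle : LinearMap.range A'.mulVecLin ≤ LinearMap.range A.mulVecLin := by
    rintro _ ⟨g, rfl⟩
    refine ⟨(1 : Matrix κ κ K).submatrix (Equiv.refl κ) eJ *ᵥ g, ?_⟩
    rw [mulVecLin_apply, mulVecLin_apply, mulVec_mulVec, mul_submatrix_one]
    rfl
  have hrange : LinearMap.range A'.mulVecLin = LinearMap.range A.mulVecLin :=
    Submodule.eq_of_le_of_finrank_le hle (by
      rw [← rank, hA, LinearMap.finrank_range_of_inj hA'_inj, Module.finrank_fin_fun])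
  obtain ⟨g, hg⟩ : A *ᵥ q ∈ LinearMap.range A'.mulVecLin := hrange ▸ ⟨q, rfl⟩
  have hg0 : g = 0 := hM (by
    rw [← hA'_rows, mulVec_zero]
    ext m
    exact (congrFun hg (eI m)).trans (hq m))
  rw [← hg, hg0, mulVecLin_apply, mulVec_zero]

end Matrix

section Syzygies

open Submodule Matrix

variable {R M ι : Type*} [CommRing R] [AddCommGroup M] [Module R M] [Fintype ι]
  {f : ι → M}

theorem mem_span_image_iff_exists_linearCombination_eq {s : Set ι} {x : M} :
    x ∈ span R (f '' s) ↔
      ∃ c : ι → R, (∀ i ∉ s, c i = 0) ∧ Fintype.linearCombination R f c = x := by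
  rw [Finsupp.mem_span_image_iff_linearCombination]
  constructor
  · rintro ⟨l, hl, rfl⟩
    refine ⟨l, fun i hi => Finsupp.notMem_support_iff.mp fun h => hi (hl h), ?_⟩
    rw [← Finsupp.linearCombination_eq_fintype_linearCombination_apply]
    exact congrArg _ ((Finsupp.linearEquivFunOnFinite R R ι).symm_apply_apply l)
  · rintro ⟨c, hc, rfl⟩
    refine ⟨Finsupp.equivFunOnFinite.symm c, fun i hi => ?_,
      Finsupp.linearCombination_eq_fintype_linearCombination_apply R f c⟩
    by_contra his
    exact Finsupp.mem_support_iff.mp hi (hc i his)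

theorem mem_span_image_iff_exists_mem_ker {s : Set ι} {i₀ : ι} (hi₀ : i₀ ∉ s) :
    f i₀ ∈ span R (f '' s) ↔ ∃ v ∈ LinearMap.ker (Fintype.linearCombination R f),
      v i₀ = 1 ∧ ∀ i, i ≠ i₀ → i ∉ s → v i = 0 := by
  classical
  rw [mem_span_image_iff_exists_linearCombination_eq]
  constructor
  · rintro ⟨c, hc, hcf⟩
    refine ⟨Pi.single i₀ 1 - c, by simp [hcf], by simp [hc i₀ hi₀], fun i hi his => ?_⟩
    simp [hi, hc i his]
  · rintro ⟨v, hv, hv₀, hvs⟩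
    refine ⟨Pi.single i₀ 1 - v, fun i his => ?_, ?_⟩
    · by_cases hi : i = i₀
      · simp [hi, hv₀]
      · simp [hi, hvs i hi his]
    · rw [LinearMap.mem_ker] at hv
      simp [hv]

theorem span_image_compl_range_eq_of_isUnit_det {κ ρ : Type*} [Fintype ρ] [DecidableEq ρ]
    {σ : κ → ι → R} (hσ : ∀ j, σ j ∈ LinearMap.ker (Fintype.linearCombination R f))
    (eI : ρ → ι) (eJ : ρ → κ) (hdet : IsUnit (Matrix.of fun m l => σ (eJ l) (eI m)).det) :
    span R (f '' (Set.range eI)ᶜ) = span R (Set.range f) := by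
  set B := Matrix.of fun m l => σ (eJ l) (eI m)
  have hmem : ∀ m₀, f (eI m₀) ∈ span R (f '' (Set.range eI)ᶜ) := by
    intro m₀
    set c := B⁻¹ *ᵥ Pi.single m₀ 1
    set v := ∑ l, c l • σ (eJ l)
    have hv : v ∈ LinearMap.ker (Fintype.linearCombination R f) :=
      sum_mem fun l _ => smul_mem _ _ (hσ (eJ l))
    have hvI : (fun m => v (eI m)) = Pi.single m₀ 1 := by
      have : (fun m => v (eI m)) = B *ᵥ c := by
        ext m
        simp [v, B, mulVec, dotProduct, Finset.sum_apply, mul_comm]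
      rw [this, mulVec_mulVec, mul_nonsing_inv _ hdet, one_mulVec]
    refine (mem_span_image_iff_exists_mem_ker (by simp)).mpr
      ⟨v, hv, by simpa using congrFun hvI m₀, fun i hi hiI => ?_⟩
    obtain ⟨m, rfl⟩ : i ∈ Set.range eI := by simpa using hiI
    rw [congrFun hvI m, Pi.single_eq_of_ne (by rintro rfl; exact hi rfl)]
  refine le_antisymm (span_mono (Set.image_subset_range _ _)) (span_le.mpr ?_)
  rintro _ ⟨i, rfl⟩
  by_cases hi : i ∈ Set.range eI
  · obtain ⟨m, rfl⟩ := hi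
    exact hmem m
  · exact subset_span ⟨i, hi, rfl⟩

theorem notMem_span_image_of_isUnit_submatrix_det {K κ : Type*} [Field K] [Fintype κ]
    (φ : R →+* K) {σ : κ → ι → R}
    (hσ : LinearMap.ker (Fintype.linearCombination R f) ≤ span R (Set.range σ))
    {r : ℕ} (A₀ : Matrix ι κ K) (hA₀ : ∀ i j, A₀ i j = φ (σ j i)) (hr : A₀.rank = r)
    (eI : Fin r → ι) (eJ : Fin r → κ) (hdet : IsUnit (A₀.submatrix eI eJ).det)
    {i₀ : ι} (hi₀ : i₀ ∉ Set.range eI) :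
    f i₀ ∉ span R (f '' {i | i ∉ Set.range eI ∧ i ≠ i₀}) := by
  intro hmem
  obtain ⟨v, hv, hv₀, hvs⟩ := (mem_span_image_iff_exists_mem_ker (by simp)).mp hmem
  obtain ⟨q, hq⟩ := (mem_span_range_iff_exists_fun R).mp (hσ hv)
  have hφv : (fun i => φ (v i)) = A₀ *ᵥ fun j => φ (q j) := by
    ext i
    simp [← hq, mulVec, dotProduct, hA₀, mul_comm]
  have hzero := A₀.mulVec_eq_zero_of_apply_eq_zero_of_isUnit_submatrix_det hr eI eJ hdet
    (q := fun j => φ (q j)) fun m => by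
      rw [← hφv]
      exact (congrArg φ (hvs (eI m) (fun h => hi₀ ⟨m, h⟩) (by simp))).trans (map_zero φ)
  simpa [← hφv, hv₀] using congrFun hzero i₀

end Syzygies

theorem comap_combMap_eq_ker {k : Type*} [Field k] {n d t : ℕ} (h : Fin t → FreeMod k n d)
    (U : Submodule (MvPolynomial (Fin n) k) (FreeMod k n d)) :
    U.comap (combMap h) =
      LinearMap.ker (Fintype.linearCombination (MvPolynomial (Fin n) k) fun i => U.mkQ (h i)) := by
  have hcomp : U.mkQ ∘ₗ combMap h =
      Fintype.linearCombination (MvPolynomial (Fin n) k) fun i => U.mkQ (h i) :=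
    LinearMap.ext fun v => by simp [combMap, Fintype.linearCombination_apply]
  rw [← hcomp, LinearMap.ker_comp, U.ker_mkQ]

theorem pruning_minimization_general {k : Type*} [Field k] {n d t N r : ℕ}
    (U V : Submodule (MvPolynomial (Fin n) k) (FreeMod k n d))
    (h : Fin t → FreeMod k n d)
    (deg : Fin t → (Fin n →₀ ℕ))
    (hgen : Submodule.span (MvPolynomial (Fin n) k)
        (Set.range fun i => U.mkQ (h i)) = V.map U.mkQ)
    (σ : Fin N → FreeMod k n t)
    (hS : Submodule.span (MvPolynomial (Fin n) k) (Set.range σ)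
        = Submodule.comap (combMap h) U)
    (hShom : ∀ j, ∃ γ : Fin n →₀ ℕ, ∀ i, ∀ m ∈ (σ j i).support, m + deg i = γ)
    (A₀ : Matrix (Fin t) (Fin N) k)
    (hA₀ : ∀ i j, A₀ i j = (σ j i).coeff 0)
    (hrank : A₀.rank = r)
    (eI : Fin r → Fin t) (eJ : Fin r → Fin N)
    (hinv : IsUnit (A₀.submatrix eI eJ).det) :
    Submodule.span (MvPolynomial (Fin n) k)
        {x | ∃ i, i ∉ Set.range eI ∧ x = U.mkQ (h i)} = V.map U.mkQ ∧
      ∀ i, i ∉ Set.range eI →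
        U.mkQ (h i) ∉ Submodule.span (MvPolynomial (Fin n) k)
          {x | ∃ j, j ∉ Set.range eI ∧ j ≠ i ∧ x = U.mkQ (h j)} := by
  rw [comap_combMap_eq_ker] at hS
  choose γ hγ using hShom
  have hdet : IsUnit (Matrix.of fun m l => σ (eJ l) (eI m)).det := by
    refine MvPolynomial.isUnit_of_isWeightedHomogeneous_one_of_constantCoeff_ne_zero
      (MvPolynomial.isWeightedHomogeneous_det _ (fun m => Finsupp.weight _ (deg (eI m)))
        (fun l => Finsupp.weight _ (γ (eJ l))) fun m l =>
          MvPolynomial.isWeightedHomogeneous_of_forall_add_eq (hγ _ _)) ?_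
    rw [RingHom.map_det]
    convert hinv.ne_zero
    ext
    simp [hA₀, MvPolynomial.constantCoeff_eq]
  refine ⟨?_, fun i₀ hi₀ => ?_⟩
  · have hset : {x | ∃ i, i ∉ Set.range eI ∧ x = U.mkQ (h i)} =
        (fun i => U.mkQ (h i)) '' (Set.range eI)ᶜ :=
      Set.ext fun _ =>
        ⟨fun ⟨i, hi, hx⟩ => ⟨i, hi, hx.symm⟩, fun ⟨i, hi, hx⟩ => ⟨i, hi, hx.symm⟩⟩
    rw [hset, ← hgen]
    exact span_image_compl_range_eq_of_isUnit_det
      (fun j => hS.le (Submodule.subset_span ⟨j, rfl⟩)) eI eJ hdet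
  · have hset : {x | ∃ j, j ∉ Set.range eI ∧ j ≠ i₀ ∧ x = U.mkQ (h j)} =
        (fun i => U.mkQ (h i)) '' {j | j ∉ Set.range eI ∧ j ≠ i₀} :=
      Set.ext fun _ => ⟨fun ⟨j, hj, hji, hx⟩ => ⟨j, ⟨hj, hji⟩, hx.symm⟩,
        fun ⟨j, ⟨hj, hji⟩, hx⟩ => ⟨j, hj, hji, hx.symm⟩⟩
    rw [hset]
    exact notMem_span_image_of_isUnit_submatrix_det MvPolynomial.constantCoeff hS.ge A₀
      (fun i j => by rw [hA₀, MvPolynomial.constantCoeff_eq]) hrank eI eJ hinv hi₀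

/-- **Pruning minimization.**  Let `U ⊆ V ⊆ R^d` be `ℤ^n`-graded submodules, `h_1, …, h_t`
homogeneous elements of `V` whose images generate `V/U`, and `σ_1, …, σ_N` a homogeneous
generating set of the syzygy module.  Let `A₀` over `k` be the matrix of constant terms of
the syzygy matrix `A = (σ_j i)`, let `r = rank A₀`, and let `I × J` index an invertible
`r × r` submatrix of `A₀`.  Then `{h_i + U : i ∉ I}` is a minimal generating set of
`V/U`. -/
theorem pruning_minimization {k : Type*} [Field k] {n d t N r : ℕ}
    (U V : Submodule (MvPolynomial (Fin n) k) (FreeMod k n d)) (hUV : U ≤ V)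
    (hUgr : ∀ f ∈ U, ∀ β : Fin n →₀ ℕ,
      (fun c => MvPolynomial.monomial β ((f c).coeff β)) ∈ U)
    (hVgr : ∀ f ∈ V, ∀ β : Fin n →₀ ℕ,
      (fun c => MvPolynomial.monomial β ((f c).coeff β)) ∈ V)
    (h : Fin t → FreeMod k n d) (hmem : ∀ i, h i ∈ V)
    (deg : Fin t → (Fin n →₀ ℕ))
    (hhom : ∀ i, ∀ c : Fin d, ∀ m ∈ ((h i) c).support, m = deg i)
    (hgen : Submodule.span (MvPolynomial (Fin n) k)
        (Set.range fun i => U.mkQ (h i)) = V.map U.mkQ)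
    (σ : Fin N → FreeMod k n t)
    (hS : Submodule.span (MvPolynomial (Fin n) k) (Set.range σ)
        = Submodule.comap (combMap h) U)
    (hShom : ∀ j, ∃ γ : Fin n →₀ ℕ, ∀ i, ∀ m ∈ (σ j i).support, m + deg i = γ)
    (A₀ : Matrix (Fin t) (Fin N) k)
    (hA₀ : ∀ i j, A₀ i j = (σ j i).coeff 0)
    (hrank : A₀.rank = r)
    (eI : Fin r → Fin t) (eJ : Fin r → Fin N)
    (hIinj : Function.Injective eI) (hJinj : Function.Injective eJ)
    (hinv : IsUnit (A₀.submatrix eI eJ).det) :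
    Submodule.span (MvPolynomial (Fin n) k)
        {x | ∃ i, i ∉ Set.range eI ∧ x = U.mkQ (h i)} = V.map U.mkQ ∧
      ∀ i, i ∉ Set.range eI →
        U.mkQ (h i) ∉ Submodule.span (MvPolynomial (Fin n) k)
          {x | ∃ j, j ∉ Set.range eI ∧ j ≠ i ∧ x = U.mkQ (h j)} :=
  pruning_minimization_general U V h deg hgen σ hS hShom A₀ hA₀ hrank eI eJ hinv
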